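/- arXiv:2505.02800 — 4 statements merged into one kernel-verified Lean document; each statement's English description precedes it below -/
import Mathlib

section
/- The discrete signature is invariant under time-warping: if a time-series y is obtained from x = (x₁,...,x_n) by duplicating some entry x_j (i.e., y = (x₁,...,x_{j-1}, x_j, x_j, x_{j+1},...,x_n)), then every discrete signature coefficient of y equals the corresponding coefficient of x. -/
open Finset

/-- Evaluation of the monomial with exponent vector `a` at `v ∈ ℝ^d`. -/
noncomputable def mon {d : ℕ} (a : Fin d → ℕ) (v : Fin d → ℝ) : ℝ := ∏ i, v i ^ a i

/-- Discrete signature coefficient of the time-series `x = (x₀, …, x_n)` in `ℝ^d`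
associated to the word of monomials `p₁ ⊗ ⋯ ⊗ p_ℓ`:
`Σ_{1 ≤ i₁ < ⋯ < i_ℓ ≤ n} ∏_k p_k(x_{i_k+1} − x_{i_k})`. -/
noncomputable def dsig {d n ℓ : ℕ} (x : Fin (n + 1) → Fin d → ℝ)
    (p : Fin ℓ → Fin d → ℕ) : ℝ :=
  ∑ i ∈ Finset.univ.filter (fun i : Fin ℓ → Fin n => ∀ a b : Fin ℓ, a < b → i a < i b),
    ∏ k, mon (p k) (x (i k).succ - x (i k).castSucc)

lemma mon_zero_of_ne {d : ℕ} {a : Fin d → ℕ} (ha : a ≠ 0) : mon a 0 = 0 := by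
  obtain ⟨i, hi⟩ := Function.ne_iff.mp ha
  exact Finset.prod_eq_zero (Finset.mem_univ i)
    (by simp [zero_pow (by simpa using hi)])

/-- the discrete signature is invariant under time-warping: duplicating
an entry of the time-series does not change any signature coefficient. -/
theorem dsig_time_warping (d n ℓ : ℕ) (x : Fin (n + 1) → Fin d → ℝ) (j : Fin (n + 1))
    (y : Fin (n + 2) → Fin d → ℝ)
    (hy : ∀ i : Fin (n + 2), y i =
      if h : (i : ℕ) ≤ (j : ℕ) then x ⟨i, lt_of_le_of_lt h j.isLt⟩
      else x ⟨(i : ℕ) - 1, by have := i.isLt; omega⟩)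
    (p : Fin ℓ → Fin d → ℕ) (hp : ∀ k, p k ≠ 0) :
    dsig y p = dsig x p := by
  classical
  have key : ∀ i : Fin (n + 2), ∀ m : Fin (n + 1),
      ((i : ℕ) ≤ (j : ℕ) ∧ (m : ℕ) = (i : ℕ) ∨
        (j : ℕ) < (i : ℕ) ∧ (m : ℕ) = (i : ℕ) - 1) → y i = x m := by
    intro i m hm
    rw [hy]
    split_ifs with h
    · exact congrArg x (Fin.ext (by simp only [Fin.val_mk]; omega))
    · push_neg at h; exact congrArg x (Fin.ext (by simp only [Fin.val_mk]; omega))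
  unfold dsig
  rw [← Finset.sum_filter_of_ne
      (p := fun i : Fin ℓ → Fin (n + 1) => ∀ k, i k ≠ j)
      (by
        intro i _ hne
        by_contra hk
        push_neg at hk
        obtain ⟨k, hk⟩ := hk
        apply hne
        apply Finset.prod_eq_zero (Finset.mem_univ k)
        rw [hk]
        have h1 : y j.succ = x j := key j.succ j (Or.inr ⟨by simp, by simp⟩)
        have h2 : y j.castSucc = x j := key j.castSucc j (Or.inl ⟨by simp, by simp⟩)
        rw [h1, h2, sub_self]
        exact mon_zero_of_ne (hp k))]
  have himg : (Finset.univ.filter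
        (fun i : Fin ℓ → Fin (n + 1) => ∀ a b : Fin ℓ, a < b → i a < i b)).filter
        (fun i => ∀ k, i k ≠ j)
      = (Finset.univ.filter
        (fun i : Fin ℓ → Fin n => ∀ a b : Fin ℓ, a < b → i a < i b)).image
        (fun i k => j.succAbove (i k)) := by
    ext i
    simp only [Finset.mem_filter, Finset.mem_image, Finset.mem_univ, true_and]
    constructor
    · rintro ⟨hinc, hne⟩
      choose f hf using fun k => Fin.exists_succAbove_eq (hne k)
      refine ⟨f, fun a b hab => ?_, funext hf⟩
      have := hinc a b hab
      rw [← hf a, ← hf b] at this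
      exact Fin.succAbove_lt_succAbove_iff.mp this
    · rintro ⟨f, hf, rfl⟩
      exact ⟨fun a b hab => Fin.succAbove_lt_succAbove_iff.mpr (hf a b hab),
        fun k => Fin.succAbove_ne j (f k)⟩
  rw [himg, Finset.sum_image (fun a _ b _ hab => funext fun k =>
    Fin.succAbove_right_injective (congrFun hab k))]
  apply Finset.sum_congr rfl
  intro i _
  apply Finset.prod_congr rfl
  intro k _
  congr 1
  show y (j.succAbove (i k)).succ - y (j.succAbove (i k)).castSucc
      = x (i k).succ - x (i k).castSucc
  set m := i k with hm
  rcases lt_or_ge m.castSucc j with h | h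
  · rw [Fin.succAbove_of_castSucc_lt _ _ h]
    have hmj : (m : ℕ) < (j : ℕ) := h
    rw [key m.castSucc.succ m.succ (Or.inl ⟨by simp; omega, by simp⟩),
      key m.castSucc.castSucc m.castSucc (Or.inl ⟨by simp; omega, by simp⟩)]
  · rw [Fin.succAbove_of_le_castSucc _ _ h]
    have hmj : (j : ℕ) ≤ (m : ℕ) := h
    rw [key m.succ.succ m.succ (Or.inr ⟨by simp; omega, by simp⟩),
      key m.succ.castSucc m.castSucc (Or.inr ⟨by simp; omega, by simp⟩)]
end

section
/- Discrete Chen relation: for time-series x = (x₁,...,x_n) and y = (y₁,...,y_m) in ℝ^d, let x|y denote the shifted concatenation (x₁,...,x_n, y₂ − y₁ + x_n, ..., y_m − y₁ + x_n). Then for any monomials p₁,...,p_ℓ of positive degree, ⟨Σ(x|y), p₁⊗⋯⊗p_ℓ⟩ = Σ_{k=0}^{ℓ} ⟨Σ(x), p₁⊗⋯⊗p_k⟩ · ⟨Σ(y), p_{k+1}⊗⋯⊗p_ℓ⟩, with the convention that the empty word coefficient equals 1. -/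
open Finset

lemma mon_zero {d : ℕ} {a : Fin d → ℕ} (h : a ≠ 0) : mon a 0 = 0 := by
  obtain ⟨i, hi⟩ : ∃ i, a i ≠ 0 := by
    by_contra hc; push_neg at hc; exact h (funext hc)
  unfold mon
  apply Finset.prod_eq_zero (Finset.mem_univ i)
  simp [zero_pow hi]

lemma card_filter_lt_val (ℓ k : ℕ) (hk : k ≤ ℓ) :
    ((Finset.univ : Finset (Fin ℓ)).filter fun j : Fin ℓ => (j : ℕ) < k).card = k := by
  have heq : ((Finset.univ : Finset (Fin ℓ)).filter fun j : Fin ℓ => (j : ℕ) < k)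
      = Finset.map (Fin.castLEEmb hk) Finset.univ := by
    ext j
    simp only [Finset.mem_filter, Finset.mem_map, Finset.mem_univ, true_and]
    constructor
    · intro hj; exact ⟨⟨j, hj⟩, rfl⟩
    · rintro ⟨a, rfl⟩; exact a.isLt
  rw [heq, Finset.card_map, Finset.card_univ, Fintype.card_fin]

lemma mem_iff_lt_card {ℓ : ℕ} (s : Finset (Fin ℓ))
    (hdc : ∀ a b : Fin ℓ, a ≤ b → b ∈ s → a ∈ s) (j : Fin ℓ) :
    j ∈ s ↔ (j : ℕ) < s.card := by
  constructor
  · intro hj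
    have hsub : (Finset.univ.filter fun a : Fin ℓ => (a : ℕ) < (j : ℕ) + 1) ⊆ s := by
      intro a ha
      simp only [Finset.mem_filter, Finset.mem_univ, true_and] at ha
      exact hdc a j (by omega) hj
    have := Finset.card_le_card hsub
    rw [card_filter_lt_val _ _ (by omega)] at this
    omega
  · intro hcard
    by_contra hj
    have hsub : s ⊆ Finset.univ.filter fun a : Fin ℓ => (a : ℕ) < (j : ℕ) := by
      intro b hb
      simp only [Finset.mem_filter, Finset.mem_univ, true_and]
      by_contra hb2
      push_neg at hb2
      exact hj (hdc j b (by omega) hb)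
    have := Finset.card_le_card hsub
    rw [card_filter_lt_val _ _ (le_of_lt j.isLt)] at this
    omega

set_option maxHeartbeats 20000000 in
/-- discrete Chen relation for the shifted concatenation of time-series. -/
theorem dsig_chen (d n m ℓ : ℕ) (x : Fin (n + 1) → Fin d → ℝ)
    (y : Fin (m + 1) → Fin d → ℝ) (z : Fin (n + m + 2) → Fin d → ℝ)
    (hz : ∀ i : Fin (n + m + 2), z i =
      if h : (i : ℕ) ≤ n then x ⟨i, by omega⟩
      else y ⟨(i : ℕ) - (n + 1), by have := i.isLt; omega⟩ - y 0 + x (Fin.last n))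
    (p : Fin ℓ → Fin d → ℕ) (hp : ∀ k, p k ≠ 0) :
    dsig (n := n + m + 1) z p =
      ∑ k : Fin (ℓ + 1),
        dsig x (fun a : Fin (k : ℕ) => p ⟨a, by have := a.isLt; have := k.isLt; omega⟩) *
        dsig y (fun a : Fin (ℓ - (k : ℕ)) =>
          p ⟨(k : ℕ) + a, by have := a.isLt; have := k.isLt; omega⟩) := by
  classical
  -- difference structure of z
  have zdiff_lt : ∀ (j : Fin (n + m + 1)) (h : (j : ℕ) < n),
      z j.succ - z j.castSucc = x ⟨(j : ℕ) + 1, by omega⟩ - x ⟨(j : ℕ), by omega⟩ := by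
    intro j h
    rw [hz j.succ, hz j.castSucc]
    rw [dif_pos (show ((j.succ : Fin (n+m+2)) : ℕ) ≤ n by simp [Fin.val_succ]; omega),
      dif_pos (show ((j.castSucc : Fin (n+m+2)) : ℕ) ≤ n by simp; omega)]
    congr 1 <;> congr 1 <;> simp [Fin.val_succ]
  have zdiff_eq : ∀ (j : Fin (n + m + 1)), (j : ℕ) = n →
      z j.succ - z j.castSucc = 0 := by
    intro j h
    rw [hz j.succ, hz j.castSucc]
    rw [dif_neg (show ¬ ((j.succ : Fin (n+m+2)) : ℕ) ≤ n by simp [Fin.val_succ]; omega),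
      dif_pos (show ((j.castSucc : Fin (n+m+2)) : ℕ) ≤ n by simp; omega)]
    have h0 : (⟨((j.succ : Fin (n+m+2)) : ℕ) - (n+1), by have := j.isLt; simp [Fin.val_succ]; omega⟩ : Fin (m+1)) = 0 := by
      ext; simp [Fin.val_succ]; omega
    have h1 : (⟨((j.castSucc : Fin (n+m+2)) : ℕ), by have := j.isLt; simp; omega⟩ : Fin (n+1)) = Fin.last n := by
      ext; simp [h]
    rw [h0, h1]
    abel
  have zdiff_gt : ∀ (j : Fin (n + m + 1)) (h : n < (j : ℕ)),
      z j.succ - z j.castSucc =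
        y ⟨(j : ℕ) - n, by have := j.isLt; omega⟩ - y ⟨(j : ℕ) - n - 1, by have := j.isLt; omega⟩ := by
    intro j h
    rw [hz j.succ, hz j.castSucc]
    rw [dif_neg (show ¬ ((j.succ : Fin (n+m+2)) : ℕ) ≤ n by simp [Fin.val_succ]; omega),
      dif_neg (show ¬ ((j.castSucc : Fin (n+m+2)) : ℕ) ≤ n by simp; omega)]
    have h0 : (⟨((j.succ : Fin (n+m+2)) : ℕ) - (n+1), by have := j.isLt; simp [Fin.val_succ]; omega⟩ : Fin (m+1))
        = ⟨(j : ℕ) - n, by have := j.isLt; omega⟩ := by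
      ext; simp only [Fin.val_succ]; omega
    have h1 : (⟨((j.castSucc : Fin (n+m+2)) : ℕ) - (n+1), by have := j.isLt; simp; omega⟩ : Fin (m+1))
        = ⟨(j : ℕ) - n - 1, by have := j.isLt; omega⟩ := by
      ext; simp only [Fin.coe_castSucc]; omega
    rw [h0, h1]
    abel
  -- restrict to increasing tuples avoiding the value n
  simp only [dsig]
  have h1 : ∑ i ∈ Finset.univ.filter
        (fun i : Fin ℓ → Fin (n+m+1) => ∀ a b : Fin ℓ, a < b → i a < i b),
        ∏ k, mon (p k) (z (i k).succ - z (i k).castSucc)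
      = ∑ i ∈ Finset.univ.filter (fun i : Fin ℓ → Fin (n+m+1) =>
          (∀ a b : Fin ℓ, a < b → i a < i b) ∧ ∀ k : Fin ℓ, ((i k : ℕ) ≠ n)),
        ∏ k, mon (p k) (z (i k).succ - z (i k).castSucc) := by
    rw [← Finset.filter_filter]
    refine (Finset.sum_filter_of_ne ?_).symm
    intro i hi hF0 k
    by_contra hk
    apply hF0
    refine Finset.prod_eq_zero (Finset.mem_univ k) ?_
    rw [zdiff_eq (i k) hk, mon_zero (hp k)]
  rw [h1]
  -- partition by the number of indices landing below n
  have hcntlt : ∀ i : Fin ℓ → Fin (n+m+1),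
      (Finset.univ.filter fun j : Fin ℓ => ((i j : ℕ) < n)).card < ℓ + 1 := by
    intro i
    have := Finset.card_filter_le (Finset.univ : Finset (Fin ℓ))
      (fun j : Fin ℓ => ((i j : ℕ) < n))
    simp only [Finset.card_univ, Fintype.card_fin] at this
    omega
  set cnt : (Fin ℓ → Fin (n+m+1)) → Fin (ℓ+1) :=
    fun i => ⟨(Finset.univ.filter fun j : Fin ℓ => ((i j : ℕ) < n)).card, hcntlt i⟩ with hcnt
  rw [← Finset.sum_fiberwise (Finset.univ.filter (fun i : Fin ℓ → Fin (n+m+1) =>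
        (∀ a b : Fin ℓ, a < b → i a < i b) ∧ ∀ k : Fin ℓ, ((i k : ℕ) ≠ n))) cnt
      (fun i => ∏ k, mon (p k) (z (i k).succ - z (i k).castSucc))]
  refine Finset.sum_congr rfl fun k _ => ?_
  have hkl : (k : ℕ) ≤ ℓ := by have := k.isLt; omega
  -- the key classification for members of the fiber
  have key : ∀ i : Fin ℓ → Fin (n+m+1),
      (∀ a b : Fin ℓ, a < b → i a < i b) → cnt i = k →
      ∀ j : Fin ℓ, ((j : ℕ) < (k : ℕ) ↔ (i j : ℕ) < n) := by
    intro i hmono hc j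
    have hdc : ∀ a b : Fin ℓ, a ≤ b →
        b ∈ (Finset.univ.filter fun j : Fin ℓ => ((i j : ℕ) < n)) →
        a ∈ (Finset.univ.filter fun j : Fin ℓ => ((i j : ℕ) < n)) := by
      intro a b hab hb
      simp only [Finset.mem_filter, Finset.mem_univ, true_and] at hb ⊢
      rcases eq_or_lt_of_le hab with h | h
      · rwa [h]
      · have := hmono a b h
        rw [Fin.lt_def] at this
        omega
    have hcard : (Finset.univ.filter fun j : Fin ℓ => ((i j : ℕ) < n)).card = (k : ℕ) := by
      have := congrArg Fin.val hc
      simpa [hcnt] using this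
    have := mem_iff_lt_card _ hdc j
    rw [hcard] at this
    simp only [Finset.mem_filter, Finset.mem_univ, true_and] at this
    exact this.symm
  -- expand the right-hand side as a sum over pairs
  rw [Finset.sum_mul_sum]
  rw [← Finset.sum_product']
  -- the bijection
  set φ : ((Fin (k : ℕ) → Fin n) × (Fin (ℓ - (k : ℕ)) → Fin m)) → (Fin ℓ → Fin (n+m+1)) :=
    fun q j =>
      if h : (j : ℕ) < (k : ℕ) then
        ⟨(q.1 ⟨(j : ℕ), h⟩ : ℕ), by have := (q.1 ⟨(j : ℕ), h⟩).isLt; omega⟩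
      else
        ⟨n + 1 + (q.2 ⟨(j : ℕ) - (k : ℕ), by have := j.isLt; omega⟩ : ℕ),
          by have := (q.2 ⟨(j : ℕ) - (k : ℕ), by have := j.isLt; omega⟩).isLt; omega⟩ with hφ
  have hmem : ∀ q : (Fin (k : ℕ) → Fin n) × (Fin (ℓ - (k : ℕ)) → Fin m),
      q ∈ (Finset.univ.filter fun f : Fin (k : ℕ) → Fin n =>
            ∀ a b : Fin (k : ℕ), a < b → f a < f b) ×ˢ
          (Finset.univ.filter fun g : Fin (ℓ - (k : ℕ)) → Fin m =>
            ∀ a b : Fin (ℓ - (k : ℕ)), a < b → g a < g b) →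
      φ q ∈ Finset.filter (fun i => cnt i = k)
        (Finset.univ.filter fun i : Fin ℓ → Fin (n+m+1) =>
          (∀ a b : Fin ℓ, a < b → i a < i b) ∧ ∀ k' : Fin ℓ, ((i k' : ℕ) ≠ n)) := by
    rintro ⟨f, g⟩ hq
    rw [Finset.mem_product] at hq
    have hfm := (Finset.mem_filter.mp hq.1).2
    have hgm := (Finset.mem_filter.mp hq.2).2
    rw [Finset.mem_filter, Finset.mem_filter]
    refine ⟨⟨Finset.mem_univ _, ?_, ?_⟩, ?_⟩
    · -- strict mono
      intro a b hab
      rw [Fin.lt_def] at hab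
      rw [Fin.lt_def]
      simp only [hφ]
      split_ifs with h1 h2 h2
      · have h3 := hfm ⟨(a : ℕ), h1⟩ ⟨(b : ℕ), h2⟩ (by rw [Fin.lt_def]; exact hab)
        rw [Fin.lt_def] at h3
        simpa using h3
      · have h3 := (f ⟨(a : ℕ), h1⟩).isLt
        simp only [Fin.val_mk]
        omega
      · omega
      · have h3 := hgm ⟨(a : ℕ) - (k : ℕ), by have := a.isLt; omega⟩
          ⟨(b : ℕ) - (k : ℕ), by have := b.isLt; omega⟩
          (by rw [Fin.lt_def]; simp only [Fin.val_mk]; omega)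
        rw [Fin.lt_def] at h3
        simp only [Fin.val_mk] at h3 ⊢
        omega
    · -- avoids n
      intro j
      simp only [hφ]
      split_ifs with h1
      · have h3 := (f ⟨(j : ℕ), h1⟩).isLt
        simp only [Fin.val_mk]
        omega
      · simp only [Fin.val_mk]
        omega
    · -- fiber count
      have hfe : (Finset.univ.filter fun j : Fin ℓ => ((φ (f, g) j : ℕ) < n))
          = Finset.univ.filter fun j : Fin ℓ => (j : ℕ) < (k : ℕ) := by
        apply Finset.filter_congr
        intro j _
        simp only [hφ]
        split_ifs with h1
        · exact iff_of_true (by simpa using (f ⟨(j : ℕ), h1⟩).isLt) h1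
        · exact iff_of_false (by simp only [Fin.val_mk]; omega) h1
      apply Fin.ext
      show (Finset.univ.filter fun j : Fin ℓ => ((φ (f, g) j : ℕ) < n)).card = (k : ℕ)
      rw [hfe, card_filter_lt_val ℓ (k : ℕ) hkl]
  have hinj : ∀ q q' : (Fin (k : ℕ) → Fin n) × (Fin (ℓ - (k : ℕ)) → Fin m),
      φ q = φ q' → q = q' := by
    rintro ⟨f, g⟩ ⟨f', g'⟩ heq
    have hval : ∀ j : Fin ℓ, (φ (f, g) j : ℕ) = (φ (f', g') j : ℕ) := by
      intro j; rw [heq]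
    simp only [Prod.mk.injEq]
    constructor
    · funext a
      have hlt : (a : ℕ) < ℓ := by have := a.isLt; omega
      have h1 := hval ⟨(a : ℕ), hlt⟩
      simp only [hφ] at h1
      rw [dif_pos (by simpa using a.isLt), dif_pos (by simpa using a.isLt)] at h1
      apply Fin.ext
      simpa using h1
    · funext a
      have hlt : (k : ℕ) + (a : ℕ) < ℓ := by have := a.isLt; omega
      have h1 := hval ⟨(k : ℕ) + (a : ℕ), hlt⟩
      simp only [hφ] at h1
      rw [dif_neg (by simp), dif_neg (by simp)] at h1
      simp only [Fin.val_mk, add_tsub_cancel_left] at h1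
      apply Fin.ext
      have h2 : ((g ⟨(a : ℕ), by omega⟩ : Fin m) : ℕ) = ((g' ⟨(a : ℕ), by omega⟩ : Fin m) : ℕ) := by
        omega
      simpa using h2
  have hsurj : ∀ i ∈ Finset.filter (fun i => cnt i = k)
        (Finset.univ.filter fun i : Fin ℓ → Fin (n+m+1) =>
          (∀ a b : Fin ℓ, a < b → i a < i b) ∧ ∀ k' : Fin ℓ, ((i k' : ℕ) ≠ n)),
      ∃ q ∈ (Finset.univ.filter fun f : Fin (k : ℕ) → Fin n =>
            ∀ a b : Fin (k : ℕ), a < b → f a < f b) ×ˢ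
          (Finset.univ.filter fun g : Fin (ℓ - (k : ℕ)) → Fin m =>
            ∀ a b : Fin (ℓ - (k : ℕ)), a < b → g a < g b),
        φ q = i := by
    intro i hi
    rw [Finset.mem_filter, Finset.mem_filter] at hi
    obtain ⟨⟨-, hmono, havoid⟩, hc⟩ := hi
    have hkey := key i hmono hc
    have hup : ∀ j : Fin ℓ, (k : ℕ) ≤ (j : ℕ) → n + 1 ≤ (i j : ℕ) := by
      intro j hj
      have h2 : ¬ ((i j : ℕ) < n) := fun h => by have := (hkey j).mpr h; omega
      have := havoid j
      omega
    refine ⟨(fun a => ⟨(i ⟨(a : ℕ), by have := a.isLt; omega⟩ : ℕ),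
        (hkey ⟨(a : ℕ), by have := a.isLt; omega⟩).mp (by simpa using a.isLt)⟩,
      fun a => ⟨(i ⟨(k : ℕ) + (a : ℕ), by have := a.isLt; omega⟩ : ℕ) - (n + 1), by
        have h1 := hup ⟨(k : ℕ) + (a : ℕ), by have := a.isLt; omega⟩ (by simp)
        have h2 := (i ⟨(k : ℕ) + (a : ℕ), by have := a.isLt; omega⟩).isLt
        omega⟩), ?_, ?_⟩
    · rw [Finset.mem_product]
      constructor
      · rw [Finset.mem_filter]
        refine ⟨Finset.mem_univ _, ?_⟩
        intro a b hab
        rw [Fin.lt_def]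
        simp only [Fin.val_mk]
        have h3 := hmono ⟨(a : ℕ), by have := a.isLt; omega⟩ ⟨(b : ℕ), by have := b.isLt; omega⟩
          (by rw [Fin.lt_def]; simpa using hab)
        rw [Fin.lt_def] at h3
        simpa using h3
      · rw [Finset.mem_filter]
        refine ⟨Finset.mem_univ _, ?_⟩
        intro a b hab
        rw [Fin.lt_def]
        simp only [Fin.val_mk]
        have h3 := hmono ⟨(k : ℕ) + (a : ℕ), by have := a.isLt; omega⟩
          ⟨(k : ℕ) + (b : ℕ), by have := b.isLt; omega⟩
          (by rw [Fin.lt_def]; simp only [Fin.val_mk]; rw [Fin.lt_def] at hab; omega)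
        rw [Fin.lt_def] at h3
        try simp only [Fin.val_mk] at h3
        have h4 := hup ⟨(k : ℕ) + (a : ℕ), by have := a.isLt; omega⟩ (by simp)
        omega
    · funext j
      apply Fin.ext
      simp only [hφ]
      split_ifs with h1
      · simp only [Fin.val_mk]
      · have h4 : (k : ℕ) + ((j : ℕ) - (k : ℕ)) = (j : ℕ) := by omega
        have h5 := hup j (by omega)
        simp only [Fin.val_mk]
        have h6 : (⟨(k : ℕ) + ((j : ℕ) - (k : ℕ)), by have := j.isLt; omega⟩ : Fin ℓ) = j := by
          apply Fin.ext; simpa using h4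
        rw [h6]
        omega
  have hterm : ∀ q : (Fin (k : ℕ) → Fin n) × (Fin (ℓ - (k : ℕ)) → Fin m),
      (∏ a : Fin (k : ℕ), mon (p ⟨(a : ℕ), by have := a.isLt; have := k.isLt; omega⟩)
          (x (q.1 a).succ - x (q.1 a).castSucc)) *
        (∏ a : Fin (ℓ - (k : ℕ)), mon (p ⟨(k : ℕ) + (a : ℕ), by have := a.isLt; omega⟩)
          (y (q.2 a).succ - y (q.2 a).castSucc))
      = ∏ j : Fin ℓ, mon (p j) (z ((φ q) j).succ - z ((φ q) j).castSucc) := by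
    rintro ⟨f, g⟩
    conv_rhs => rw [← Finset.prod_filter_mul_prod_filter_not Finset.univ
      (fun j : Fin ℓ => (j : ℕ) < (k : ℕ))]
    congr 1
    · refine Finset.prod_bij' (fun (a : Fin (k : ℕ)) _ => (⟨(a : ℕ), by have := a.isLt; omega⟩ : Fin ℓ))
        (fun (j : Fin ℓ) hj => (⟨(j : ℕ), by simpa using hj⟩ : Fin (k : ℕ)))
        ?_ ?_ ?_ ?_ ?_
      · intro a _
        simp only [Finset.mem_filter, Finset.mem_univ, true_and, Fin.val_mk]
        exact a.isLt
      · intro j hj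
        exact Finset.mem_univ _
      · intro a _; apply Fin.ext; simp
      · intro j hj; apply Fin.ext; simp
      · intro a _
        have hlt : (a : ℕ) < ℓ := by have := a.isLt; omega
        have hφj : φ (f, g) ⟨(a : ℕ), hlt⟩ = ⟨(f a : ℕ), by have := (f a).isLt; omega⟩ := by
          simp only [hφ]
          rw [dif_pos (by simpa using a.isLt)]
        have hz1 : z (φ (f, g) ⟨(a : ℕ), hlt⟩).succ - z (φ (f, g) ⟨(a : ℕ), hlt⟩).castSucc
            = x (f a).succ - x (f a).castSucc := by
          rw [hφj, zdiff_lt _ (by simpa using (f a).isLt)]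
          congr 1 <;> exact congrArg x (Fin.ext (by simp [Fin.val_succ]))
        exact (congrArg₂ mon rfl hz1.symm : _)
    · refine Finset.prod_bij' (fun (a : Fin (ℓ - (k : ℕ))) _ =>
          (⟨(k : ℕ) + (a : ℕ), by have := a.isLt; omega⟩ : Fin ℓ))
        (fun (j : Fin ℓ) hj => (⟨(j : ℕ) - (k : ℕ), by
            have h2 : ¬ ((j : ℕ) < (k : ℕ)) := by simpa using hj
            have := j.isLt; omega⟩ : Fin (ℓ - (k : ℕ))))
        ?_ ?_ ?_ ?_ ?_
      · intro a _
        simp only [Finset.mem_filter, Finset.mem_univ, true_and, Fin.val_mk, not_lt]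
        omega
      · intro j hj
        exact Finset.mem_univ _
      · intro a _; apply Fin.ext; simp
      · intro j hj
        have h2 : ¬ ((j : ℕ) < (k : ℕ)) := by simpa using hj
        apply Fin.ext; simp; omega
      · intro a _
        have hlt : (k : ℕ) + (a : ℕ) < ℓ := by have := a.isLt; omega
        have hφj : φ (f, g) ⟨(k : ℕ) + (a : ℕ), hlt⟩
            = ⟨n + 1 + (g a : ℕ), by have := (g a).isLt; omega⟩ := by
          simp only [hφ]
          rw [dif_neg (by simp)]
          apply Fin.ext
          simp only [Fin.val_mk]
          have ha2 : (⟨(k : ℕ) + (a : ℕ) - (k : ℕ), by simpa using a.isLt⟩ : Fin (ℓ - (k : ℕ))) = a :=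
            Fin.ext (by simp)
          rw [ha2]
        have hz1 : z (φ (f, g) ⟨(k : ℕ) + (a : ℕ), hlt⟩).succ
              - z (φ (f, g) ⟨(k : ℕ) + (a : ℕ), hlt⟩).castSucc
            = y (g a).succ - y (g a).castSucc := by
          rw [hφj, zdiff_gt _ (by simp only [Fin.val_mk]; omega)]
          congr 1 <;>
            exact congrArg y (Fin.ext
              (by simp only [Fin.val_succ, Fin.coe_castSucc, Fin.val_mk]; omega))
        exact (congrArg₂ mon rfl hz1.symm : _)
  exact (Finset.sum_bij (fun q _ => φ q) (fun q hq => hmem q hq)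
    (fun q _ q' _ h => hinj q q' h)
    (fun i hi => by obtain ⟨q, hq1, hq2⟩ := hsurj i hi; exact ⟨q, hq1, hq2⟩)
    (fun q _ => hterm q)).symm
end

section
/- Let x and y be time-warping reduced time-series in ℝ^d (no two consecutive entries are equal) of lengths n and m respectively. If all discrete signature coefficients of x and y agree, then n = m. -/
open Finset

lemma mon_single {d : ℕ} (j : Fin d) (v : Fin d → ℝ) : mon (Pi.single j 1) v = v j := by
  unfold mon
  rw [Finset.prod_eq_single j]
  · simp
  · intro i _ hij; simp [Pi.single_eq_of_ne hij]
  · simp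

lemma dsig_eq_zero_of_gt {d n ℓ : ℕ} (x : Fin (n + 1) → Fin d → ℝ)
    (h : n < ℓ) (p : Fin ℓ → Fin d → ℕ) : dsig x p = 0 := by
  unfold dsig
  rw [Finset.sum_eq_zero]
  intro i hi
  rw [Finset.mem_filter] at hi
  have hmono : StrictMono i := fun a b hab => hi.2 a b hab
  have := Fintype.card_le_of_injective i hmono.injective
  simp only [Fintype.card_fin] at this
  omega

lemma strictMono_fin_self {n : ℕ} (f : Fin n → Fin n) (hf : StrictMono f) :
    f = id := by
  have hsurj : Function.Surjective f :=
    Finite.surjective_of_injective hf.injective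
  have h : Set.range f = Set.range (@id (Fin n)) := by
    simp [Set.range_eq_univ.2 hsurj, Set.range_id]
  exact (@StrictMono.range_inj (Fin n) (Fin n) _ _ (inferInstance : WellFoundedLT (Fin n)) f id hf strictMono_id).1 h

lemma dsig_diag {d n : ℕ} (x : Fin (n + 1) → Fin d → ℝ) (p : Fin n → Fin d → ℕ) :
    dsig x p = ∏ k : Fin n, mon (p k) (x k.succ - x k.castSucc) := by
  unfold dsig
  have : Finset.univ.filter
      (fun i : Fin n → Fin n => ∀ a b : Fin n, a < b → i a < i b) = {id} := by
    ext i
    simp only [Finset.mem_filter, Finset.mem_singleton, Finset.mem_univ, true_and]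
    constructor
    · intro h; exact strictMono_fin_self i (fun a b hab => h a b hab)
    · rintro rfl; exact fun a b hab => hab
  rw [this, Finset.sum_singleton]
  rfl

lemma not_lt_of_dsig {d n m : ℕ}
    (x : Fin (n + 1) → Fin d → ℝ) (y : Fin (m + 1) → Fin d → ℝ)
    (hy : ∀ j : Fin m, y j.succ ≠ y j.castSucc)
    (hsig : ∀ (ℓ : ℕ) (p : Fin ℓ → Fin d → ℕ), (∀ k, p k ≠ 0) → dsig x p = dsig y p) :
    ¬ n < m := by
  intro hlt
  have hc : ∀ k : Fin m, ∃ j : Fin d, (y k.succ - y k.castSucc) j ≠ 0 := by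
    intro k
    by_contra hcon
    push_neg at hcon
    exact hy k (by funext j; have := hcon j; simp [Pi.sub_apply, sub_eq_zero] at this; exact this)
  choose c hc using hc
  set p : Fin m → Fin d → ℕ := fun k => Pi.single (c k) 1 with hp
  have hpne : ∀ k, p k ≠ 0 := by
    intro k h
    have := congrFun h (c k)
    simp [hp, Pi.single_eq_same] at this
  have h1 := hsig m p hpne
  rw [dsig_eq_zero_of_gt x hlt, dsig_diag] at h1
  have : ∏ k : Fin m, mon (p k) (y k.succ - y k.castSucc) ≠ 0 := by
    apply Finset.prod_ne_zero_iff.2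
    intro k _
    rw [hp, mon_single]
    exact hc k
  exact this h1.symm

/-- time-warping reduced time-series with the same discrete signature
have the same length. -/
theorem dsig_twr_same_length (d n m : ℕ)
    (x : Fin (n + 1) → Fin d → ℝ) (y : Fin (m + 1) → Fin d → ℝ)
    (hx : ∀ j : Fin n, x j.succ ≠ x j.castSucc)
    (hy : ∀ j : Fin m, y j.succ ≠ y j.castSucc)
    (hsig : ∀ (ℓ : ℕ) (p : Fin ℓ → Fin d → ℕ), (∀ k, p k ≠ 0) → dsig x p = dsig y p) :
    n = m := by
  have h1 := not_lt_of_dsig x y hy hsig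
  have h2 := not_lt_of_dsig y x hx (fun ℓ p hp => (hsig ℓ p hp).symm)
  omega
end

section
/- Let x = (x₁,...,x_n) and y = (y₁,...,y_n) be one-dimensional time-series (in ℝ) with nonzero consecutive differences. If all discrete signature coefficients ⟨Σ(x), Z^{a₁} ⊗ ⋯ ⊗ Z^{a_ℓ}⟩ and ⟨Σ(y), Z^{a₁} ⊗ ⋯ ⊗ Z^{a_ℓ}⟩ agree for all sequences of positive integers (a₁,...,a_ℓ), then the sequences of consecutive differences of x and y are equal; equivalently, x and y differ by a constant translation. -/
open Finset

/- With the maximal word length `ℓ = n` the only increasing index tuple is the identity, so the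
signature coefficient is a single monomial in the increments; comparing the monomials for
`Z ⊗ ⋯ ⊗ Z` and for the same word with the `j`-th letter squared isolates the `j`-th increment,
which can be cancelled since the increments of `x` are nonzero. -/

/-- Discrete signature coefficient of a one-dimensional time-series `x = (x₀, …, x_n)`
for the word `Z^{a₁} ⊗ ⋯ ⊗ Z^{a_ℓ}`. -/
noncomputable def dsig1 {n ℓ : ℕ} (x : Fin (n + 1) → ℝ) (a : Fin ℓ → ℕ) : ℝ :=
  ∑ i ∈ Finset.univ.filter (fun i : Fin ℓ → Fin n => ∀ s t : Fin ℓ, s < t → i s < i t),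
    ∏ k, (x (i k).succ - x (i k).castSucc) ^ a k

theorem dsig1_of_length_eq {n : ℕ} (x : Fin (n + 1) → ℝ) (a : Fin n → ℕ) :
    dsig1 x a = ∏ k, (x k.succ - x k.castSucc) ^ a k := by
  have hid : univ.filter (fun i : Fin n → Fin n => ∀ s t, s < t → i s < i t) = {id} := by
    ext i
    simp only [mem_filter, mem_univ, true_and, mem_singleton]
    exact ⟨fun hi => StrictMono.eq_id fun s t => hi s t, fun hi => hi ▸ fun _ _ => id⟩
  rw [dsig1, hid, sum_singleton]
  rfl

theorem Finset.prod_pow_pi_single_add_one {ι M : Type*} [Fintype ι] [DecidableEq ι]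
    [CommMonoid M] (f : ι → M) (j : ι) :
    ∏ k, f k ^ (Pi.single j 1 k + 1) = f j * ∏ k, f k := by
  simp only [pow_add, prod_mul_distrib, Pi.single_apply, pow_ite, pow_one, pow_zero, prod_ite_eq',
    mem_univ, if_true]

theorem dsig1_injective_general (n : ℕ) (x y : Fin (n + 1) → ℝ)
    (hx : ∀ j : Fin n, x j.succ - x j.castSucc ≠ 0)
    (hsig : ∀ (ℓ : ℕ) (a : Fin ℓ → ℕ), (∀ k, 0 < a k) → dsig1 x a = dsig1 y a) :
    ∀ j : Fin n, x j.succ - x j.castSucc = y j.succ - y j.castSucc := by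
  intro j
  have hprod : ∏ k : Fin n, (x k.succ - x k.castSucc) =
      ∏ k : Fin n, (y k.succ - y k.castSucc) := by
    simpa [dsig1_of_length_eq] using hsig n (fun _ => 1) fun _ => one_pos
  have hprod_j := hsig n (fun k => (Pi.single j 1 : Fin n → ℕ) k + 1) fun _ => Nat.succ_pos _
  simp only [dsig1_of_length_eq, prod_pow_pi_single_add_one, ← hprod] at hprod_j
  exact mul_right_cancel₀ (prod_ne_zero_iff.2 fun k _ => hx k) hprod_j

/-- one-dimensional time-series with nonzero consecutive differences
and equal discrete signatures have equal difference sequences. -/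
theorem dsig1_injective (n : ℕ) (x y : Fin (n + 1) → ℝ)
    (hx : ∀ j : Fin n, x j.succ - x j.castSucc ≠ 0)
    (hy : ∀ j : Fin n, y j.succ - y j.castSucc ≠ 0)
    (hsig : ∀ (ℓ : ℕ) (a : Fin ℓ → ℕ), (∀ k, 0 < a k) → dsig1 x a = dsig1 y a) :
    ∀ j : Fin n, x j.succ - x j.castSucc = y j.succ - y j.castSucc :=
  dsig1_injective_general n x y hx hsig
end
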